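/- arXiv:math/9308203 — 8 statements merged into one kernel-verified Lean document; each statement's English description precedes it below -/
import Mathlib

section
/- Every proper pleasant ideal on a regular uncountable cardinal κ is subnormal: the ideal generated by I ∪ NS_κ is a proper normal ideal extending I. -/
open Set

namespace PaperIdeals

/-- Diagonal union of a family `X` indexed by a set `A` of ordinals. -/
def diagU (A : Set Ordinal.{0}) (X : Ordinal.{0} → Set Ordinal.{0}) : Set Ordinal.{0} :=
  {ξ | ∃ α < ξ, α ∈ A ∧ ξ ∈ X α}

/-- `X` is bounded below `κ`. -/
def BddIn (κ : Cardinal.{0}) (X : Set Ordinal.{0}) : Prop := ∃ θ < κ.ord, X ⊆ Iio θ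

/-- `J` is a `<κ`-complete ideal on `κ` containing all singletons,
closed under subsets and (finite and small) unions. -/
def IsIdeal (κ : Cardinal.{0}) (J : Set Ordinal.{0} → Prop) : Prop :=
  (∀ X, J X → X ⊆ Iio κ.ord) ∧
  (∀ X Y, J X → Y ⊆ X → J Y) ∧
  (∀ X Y, J X → J Y → J (X ∪ Y)) ∧
  (∀ ξ < κ.ord, J {ξ}) ∧
  (∀ θ : Ordinal.{0}, θ.card < κ → ∀ X : Ordinal.{0} → Set Ordinal.{0},
    (∀ α, J (X α)) → J (⋃ α ∈ Iio θ, X α))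

def Proper (κ : Cardinal.{0}) (J : Set Ordinal.{0} → Prop) : Prop := ¬ J (Iio κ.ord)

/-- The coideal `I⁺`. -/
def Pos (κ : Cardinal.{0}) (J : Set Ordinal.{0} → Prop) (X : Set Ordinal.{0}) : Prop :=
  X ⊆ Iio κ.ord ∧ ¬ J X

/-- The dual filter `I*`. -/
def Dual (κ : Cardinal.{0}) (J : Set Ordinal.{0} → Prop) (X : Set Ordinal.{0}) : Prop :=
  X ⊆ Iio κ.ord ∧ J (Iio κ.ord \ X)

/-- The restriction `I ↾ A`. -/
def restrict (κ : Cardinal.{0}) (J : Set Ordinal.{0} → Prop) (A : Set Ordinal.{0})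
    (X : Set Ordinal.{0}) : Prop :=
  X ⊆ Iio κ.ord ∧ J (X ∩ A)

/-- Pleasant: closed under diagonal unions indexed by sets in the ideal. -/
def Pleasant (J : Set Ordinal.{0} → Prop) : Prop :=
  ∀ A, J A → ∀ X : Ordinal.{0} → Set Ordinal.{0}, (∀ α, J (X α)) → J (diagU A X)

/-- Prepleasant: closed under diagonal unions of bounded sets indexed by sets in the ideal. -/
def Prepleasant (κ : Cardinal.{0}) (J : Set Ordinal.{0} → Prop) : Prop :=
  ∀ Q, J Q → ∀ B : Ordinal.{0} → Set Ordinal.{0}, (∀ α, BddIn κ (B α)) → J (diagU Q B)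

/-- Normal: closed under full `κ`-indexed diagonal unions. -/
def Normal (κ : Cardinal.{0}) (J : Set Ordinal.{0} → Prop) : Prop :=
  ∀ X : Ordinal.{0} → Set Ordinal.{0}, (∀ α, J (X α)) → J (diagU (Iio κ.ord) X)

/-- Quasinormal ideal. -/
def Quasinormal (κ : Cardinal.{0}) (J : Set Ordinal.{0} → Prop) : Prop :=
  ∀ X : Ordinal.{0} → Set Ordinal.{0}, (∀ α, J (X α)) →
    ∃ Q, Dual κ J Q ∧ J (diagU Q X)

/-- Club subset of `κ`: unbounded in `κ.ord` and closed under limits. -/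
def IsClubIn (κ : Cardinal.{0}) (C : Set Ordinal.{0}) : Prop :=
  C ⊆ Iio κ.ord ∧ (∀ α < κ.ord, ∃ β ∈ C, α < β) ∧
  (∀ δ < κ.ord, Order.IsSuccLimit δ → (∀ α < δ, ∃ β ∈ C, α < β ∧ β < δ) → δ ∈ C)

/-- Stationary subset of `κ`. -/
def StatIn (κ : Cardinal.{0}) (S : Set Ordinal.{0}) : Prop :=
  S ⊆ Iio κ.ord ∧ ∀ C, IsClubIn κ C → (S ∩ C).Nonempty

/-- The nonstationary ideal `NS κ`. -/
def NS (κ : Cardinal.{0}) (X : Set Ordinal.{0}) : Prop :=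
  X ⊆ Iio κ.ord ∧ ∃ C, IsClubIn κ C ∧ X ∩ C = ∅

/-- Membership in the ideal generated by a family `S`. -/
def genIdeal (κ : Cardinal.{0}) (S : Set Ordinal.{0} → Prop) (X : Set Ordinal.{0}) : Prop :=
  ∀ K, IsIdeal κ K → (∀ Y, S Y → K Y) → K X

/-- Membership in the pleasant closure of `S` (smallest pleasant ideal containing `S`). -/
def PClosure (κ : Cardinal.{0}) (S : Set Ordinal.{0} → Prop) (X : Set Ordinal.{0}) : Prop :=
  ∀ K, IsIdeal κ K → Pleasant K → (∀ Y, S Y → K Y) → K X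

/-- Membership in the prepleasant closure of `S`. -/
def PPClosure (κ : Cardinal.{0}) (S : Set Ordinal.{0} → Prop) (X : Set Ordinal.{0}) : Prop :=
  ∀ K, IsIdeal κ K → Prepleasant κ K → (∀ Y, S Y → K Y) → K X

/-- p-point. -/
def PPoint (κ : Cardinal.{0}) (J : Set Ordinal.{0} → Prop) : Prop :=
  ∀ f : Ordinal.{0} → Ordinal.{0}, (∀ ξ : Ordinal.{0}, J {α | α < κ.ord ∧ f α = ξ}) →
    ∃ X, Dual κ J X ∧ ∀ ξ : Ordinal.{0}, BddIn κ {α | α ∈ X ∧ f α = ξ}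

/-- q-point. -/
def QPoint (κ : Cardinal.{0}) (J : Set Ordinal.{0} → Prop) : Prop :=
  ∀ f : Ordinal.{0} → Ordinal.{0}, (∀ ξ : Ordinal.{0}, BddIn κ {α | α < κ.ord ∧ f α = ξ}) →
    ∃ X, Dual κ J X ∧ Set.InjOn f X

/-- `L = {λ + 1 : λ < κ a limit ordinal}`. -/
def LSet (κ : Cardinal.{0}) : Set Ordinal.{0} :=
  {x | ∃ lam : Ordinal.{0}, Order.IsSuccLimit lam ∧ x = lam + 1 ∧ x < κ.ord}

/-- `B(Y) = {α - 1 : α ∈ Y}` for a set `Y` of successor ordinals. -/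
def BSet (Y : Set Ordinal.{0}) : Set Ordinal.{0} := {γ | γ + 1 ∈ Y}

/-- `W = {λ < κ : cof λ = ω}`. -/
def WSet (κ : Cardinal.{0}) : Set Ordinal.{0} :=
  {lam | lam < κ.ord ∧ lam.cof = Cardinal.aleph0}

/-- Węglorz's ideal `J_κ`. -/
def Weglorz (κ : Cardinal.{0}) (X : Set Ordinal.{0}) : Prop :=
  X ⊆ Iio κ.ord ∧ ∃ (f : Ordinal.{0} → Ordinal.{0}) (θ : Cardinal.{0}), θ < κ ∧
    (∀ α ∈ X, α ≠ 0 → f α < α) ∧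
    ∀ ξ : Ordinal.{0}, Cardinal.mk {α : Ordinal.{0} // α ∈ X ∧ f α = ξ} ≤ Cardinal.lift.{1} θ

/-!
The ideal generated by `I ∪ NS_κ` consists of the sets `X` with `X ∩ C ∈ I` for some club `C`.
It is proper because a proper pleasant ideal contains no club `C`: the diagonal union, over
`c ∈ C`, of the initial segments below the next point of `C` after `c` covers every point outside
`C` above `min C`. It is normal because a `κ`-diagonal union of sets `Y α ∈ I` is, on the club of
closure points of `g`, contained in a diagonal union indexed by `A ∈ I`, where `A` is unbounded
and `g α` is the next point of `A` after `α`; if `I` has no unbounded set, every `Y α` is bounded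
and the diagonal union is nonstationary.
-/

open Cardinal Order

lemma exists_isSuccLimit_lt_of_aleph0_lt_cof {c : Ordinal} (hc : ℵ₀ < c.cof)
    {F : Ordinal → Ordinal} (hF : ∀ β < c, F β < c) {a : Ordinal} (ha : a < c) :
    ∃ δ < c, a < δ ∧ IsSuccLimit δ ∧ ∀ γ < δ, ∃ x ∈ Ico γ δ, F x < δ := by
  have hc_lim : IsSuccLimit c := Ordinal.one_lt_cof_iff.1 (one_lt_aleph0.trans hc)
  set G : Ordinal → Ordinal := fun β => max β (F β) + 1
  have hG : ∀ β, β < G β ∧ F β < G β := fun β =>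
    ⟨(le_max_left _ _).trans_lt (lt_add_one _), (le_max_right _ _).trans_lt (lt_add_one _)⟩
  have hGc : ∀ β < c, G β < c := fun β hβ => hc_lim.add_one_lt (max_lt hβ (hF β hβ))
  have hcofinal : ∀ γ < Ordinal.nfp G a, ∃ x, γ ≤ x ∧ G x < Ordinal.nfp G a := by
    intro γ hγ
    obtain ⟨n, hn⟩ := Ordinal.lt_nfp_iff.1 hγ
    refine ⟨G^[n] a, hn.le, (hG _).1.trans_le ?_⟩
    simpa only [← Function.iterate_succ_apply' G] using Ordinal.iterate_le_nfp G a (n + 2)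
  refine ⟨Ordinal.nfp G a, Ordinal.nfp_lt_ord hc hGc ha,
    (hG a).1.trans_le (Ordinal.iterate_le_nfp G a 1), ?_, fun γ hγ => ?_⟩
  · refine Ordinal.isSuccLimit_iff.2 ⟨((hG a).1.trans_le (Ordinal.iterate_le_nfp G a 1)).ne_bot,
      isSuccPrelimit_of_succ_lt fun γ hγ => ?_⟩
    obtain ⟨x, hγx, hx⟩ := hcofinal γ hγ
    exact ((succ_le_succ hγx).trans (succ_le_of_lt (hG x).1)).trans_lt hx
  · obtain ⟨x, hγx, hx⟩ := hcofinal γ hγ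
    exact ⟨x, ⟨hγx, (hG x).1.trans hx⟩, (hG x).2.trans hx⟩

noncomputable def nextAbove (C : Set Ordinal) (β : Ordinal) : Ordinal :=
  sInf {c | c ∈ C ∧ β < c}

lemma nextAbove_spec {C : Set Ordinal} {β : Ordinal} (h : ∃ c ∈ C, β < c) :
    nextAbove C β ∈ C ∧ β < nextAbove C β :=
  csInf_mem h

lemma nextAbove_lt {C : Set Ordinal} {c : Ordinal} (hC : C ⊆ Iio c) (hc : 0 < c) (β : Ordinal) :
    nextAbove C β < c := by
  rcases {d | d ∈ C ∧ β < d}.eq_empty_or_nonempty with h | h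
  · rwa [nextAbove, h, Ordinal.sInf_empty]
  · exact hC (csInf_mem h).1

section Club

variable {κ : Cardinal.{0}}

lemma IsClubIn.csSup_mem {C S : Set Ordinal} (hC : IsClubIn κ C) (hSC : S ⊆ C)
    (hne : S.Nonempty) (hbdd : BddAbove S) (hlt : sSup S < κ.ord) : sSup S ∈ C := by
  by_cases hmem : sSup S ∈ S
  · exact hSC hmem
  refine hC.2.2 _ hlt (not_not.1 (mt (csSup_mem_of_not_isSuccLimit hne hbdd) hmem))
    fun α hα => ?_
  obtain ⟨β, hβ, hαβ⟩ := exists_lt_of_lt_csSup hne hα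
  exact ⟨β, hSC hβ, hαβ, (le_csSup hbdd hβ).lt_of_ne (ne_of_mem_of_not_mem hβ hmem)⟩

lemma IsClubIn.exists_lt_lt_nextAbove {C : Set Ordinal} (hC : IsClubIn κ C) {ξ : Ordinal}
    (hξ : ξ < κ.ord) (hξC : ξ ∉ C) (hne : (C ∩ Iio ξ).Nonempty) :
    ∃ c ∈ C, c < ξ ∧ ξ < nextAbove C c := by
  have hbdd : BddAbove (C ∩ Iio ξ) := ⟨ξ, fun x hx => hx.2.le⟩
  have hcξ : sSup (C ∩ Iio ξ) ≤ ξ := csSup_le hne fun x hx => hx.2.le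
  have hc : sSup (C ∩ Iio ξ) ∈ C := hC.csSup_mem inter_subset_left hne hbdd (hcξ.trans_lt hξ)
  have hcξ' := hcξ.lt_of_ne (ne_of_mem_of_not_mem hc hξC)
  obtain ⟨hd, hcd⟩ := nextAbove_spec (hC.2.1 _ (hcξ'.trans hξ))
  refine ⟨_, hc, hcξ', not_le.1 fun hdξ => ?_⟩
  exact (le_csSup hbdd ⟨hd, hdξ.lt_of_ne (ne_of_mem_of_not_mem hd hξC)⟩).not_gt hcd

lemma isClubIn_Ioo (hunc : ℵ₀ < κ) {θ : Ordinal} (hθ : θ < κ.ord) :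
    IsClubIn κ (Ioo θ κ.ord) := by
  have hlim := isSuccLimit_ord hunc.le
  refine ⟨Ioo_subset_Iio_self, fun α hα => ⟨max α θ + 1,
    ⟨(le_max_right α θ).trans_lt (lt_add_one _), hlim.add_one_lt (max_lt hα hθ)⟩,
    (le_max_left α θ).trans_lt (lt_add_one _)⟩, fun δ hδ hδlim happ => ⟨?_, hδ⟩⟩
  obtain ⟨β, hβ, -, hβδ⟩ := happ 0 hδlim.bot_lt
  exact hβ.1.trans hβδ

def diagInter (κ : Cardinal.{0}) (C : Ordinal.{0} → Set Ordinal.{0}) : Set Ordinal.{0} :=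
  {ξ | ξ < κ.ord ∧ ∀ α < ξ, ξ ∈ C α}

lemma isClubIn_diagInter (hreg : κ.IsRegular) (hunc : ℵ₀ < κ) {C : Ordinal → Set Ordinal}
    (hC : ∀ α, IsClubIn κ (C α)) : IsClubIn κ (diagInter κ C) := by
  refine ⟨fun ξ hξ => hξ.1, fun a ha => ?_, fun δ hδ hlim happ =>
    ⟨hδ, fun α hα => (hC α).2.2 δ hδ hlim fun γ hγ => ?_⟩⟩
  · set F : Ordinal → Ordinal := fun β => ⨆ α : Iio β, nextAbove (C α) β
    have hF : ∀ β < κ.ord, F β < κ.ord := fun β hβ => by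
      refine Ordinal.lift_iSup_lt_of_lt_cof (f := fun α : Iio β => nextAbove (C α) β) ?_
        fun α => (hC α).1 (nextAbove_spec ((hC α).2.1 β hβ)).1
      rw [mk_Iio_ordinal, lift_lift, ← Ordinal.lift_cof, hreg.cof_ord, lift_lt]
      exact lt_ord.1 hβ
    obtain ⟨δ, hδ, haδ, hlim, hcofinal⟩ :=
      exists_isSuccLimit_lt_of_aleph0_lt_cof (hreg.cof_ord.symm ▸ hunc) hF ha
    refine ⟨δ, ⟨hδ, fun α hα => (hC α).2.2 δ hδ hlim fun γ hγ => ?_⟩, haδ⟩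
    obtain ⟨x, ⟨hx, hxδ⟩, hFx⟩ := hcofinal (max α γ + 1) (hlim.add_one_lt (max_lt hα hγ))
    have hαx : α < x := ((le_max_left α γ).trans_lt (lt_add_one _)).trans_le hx
    have hγx : γ < x := ((le_max_right α γ).trans_lt (lt_add_one _)).trans_le hx
    obtain ⟨hmem, hlt⟩ := nextAbove_spec ((hC α).2.1 x (hxδ.trans hδ))
    exact ⟨_, hmem, hγx.trans hlt,
      (le_ciSup Ordinal.bddAbove_of_small (⟨α, hαx⟩ : Iio x)).trans_lt hFx⟩
  · obtain ⟨β, hβ, hβ', hβδ⟩ := happ (max α γ) (max_lt hα hγ)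
    exact ⟨β, hβ.2 α ((le_max_left α γ).trans_lt hβ'), (le_max_right α γ).trans_lt hβ', hβδ⟩

lemma IsClubIn.inter (hreg : κ.IsRegular) (hunc : ℵ₀ < κ) {C D : Set Ordinal}
    (hC : IsClubIn κ C) (hD : IsClubIn κ D) : IsClubIn κ (C ∩ D) := by
  refine ⟨inter_subset_left.trans hC.1, fun a ha => ?_, fun δ hδ hlim happ =>
    ⟨hC.2.2 δ hδ hlim fun α hα => ?_, hD.2.2 δ hδ hlim fun α hα => ?_⟩⟩
  · have hCD := isClubIn_diagInter hreg hunc (C := fun α => if α = 0 then C else D)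
      fun α => by split_ifs <;> assumption
    have h1 : (1 : Ordinal) < κ.ord := lt_ord.2 (by simpa using one_lt_aleph0.trans hunc)
    obtain ⟨δ, ⟨-, hδ⟩, haδ⟩ := hCD.2.1 (max a 1) (max_lt ha h1)
    have h1δ : 1 < δ := (le_max_right a 1).trans_lt haδ
    exact ⟨δ, ⟨by simpa using hδ 0 (zero_lt_one.trans h1δ), by simpa using hδ 1 h1δ⟩,
      (le_max_left a 1).trans_lt haδ⟩
  · obtain ⟨β, hβ, hαβ⟩ := happ α hα
    exact ⟨β, hβ.1, hαβ⟩
  · obtain ⟨β, hβ, hαβ⟩ := happ α hα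
    exact ⟨β, hβ.2, hαβ⟩

end Club

section Ideals

variable {κ : Cardinal.{0}} {J : Set Ordinal.{0} → Prop}

lemma IsIdeal.empty_mem (hJ : IsIdeal κ J) (hκ : 0 < κ.ord) : J ∅ :=
  hJ.2.1 _ _ (hJ.2.2.2.1 0 hκ) (empty_subset _)

lemma IsIdeal.Iio_mem (hJ : IsIdeal κ J) {θ : Ordinal} (hθ : θ < κ.ord) : J (Iio θ) := by
  refine hJ.2.1 _ _ (hJ.2.2.2.2 θ (lt_ord.1 hθ) (fun α => Iio θ ∩ {α}) fun α => ?_)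
    fun ξ hξ => mem_biUnion hξ ⟨hξ, rfl⟩
  by_cases hα : α < θ
  · exact hJ.2.1 _ _ (hJ.2.2.2.1 α (hα.trans hθ)) inter_subset_right
  · exact hJ.2.1 _ _ (hJ.empty_mem hθ.bot_lt)
      fun ξ ⟨hξθ, hξα⟩ => hα (hξα ▸ hξθ)

lemma Pleasant.Iio_ord_mem_of_isClubIn (hpl : Pleasant J) (hJ : IsIdeal κ J) (hκ : 0 < κ.ord)
    {C : Set Ordinal} (hC : IsClubIn κ C) (hCJ : J C) : J (Iio κ.ord) := by
  have hX : ∀ α, J (Iio (nextAbove C α)) := fun α => hJ.Iio_mem (nextAbove_lt hC.1 hκ α)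
  refine hJ.2.1 _ _ (hJ.2.2.1 _ _ (hJ.2.2.1 _ _ (hX 0) hCJ) (hpl C hCJ _ hX)) fun ξ hξ => ?_
  by_cases hξC : ξ ∈ C
  · exact Or.inl (Or.inr hξC)
  rcases (C ∩ Iio ξ).eq_empty_or_nonempty with hemp | hne
  · obtain ⟨hc, -⟩ := nextAbove_spec (hC.2.1 0 hκ)
    exact Or.inl (Or.inl (not_le.1 fun hcξ =>
      hemp.subset ⟨hc, hcξ.lt_of_ne (ne_of_mem_of_not_mem hc hξC)⟩))
  · obtain ⟨c, hc, hcξ, hξc⟩ := hC.exists_lt_lt_nextAbove hξ hξC hne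
    exact Or.inr ⟨c, hcξ, hc, hξc⟩

def supNS (κ : Cardinal.{0}) (J : Set Ordinal.{0} → Prop) (X : Set Ordinal.{0}) : Prop :=
  X ⊆ Iio κ.ord ∧ ∃ Y C, J Y ∧ IsClubIn κ C ∧ X ∩ C ⊆ Y

lemma supNS_of_mem (hunc : ℵ₀ < κ) (hJ : IsIdeal κ J) {X : Set Ordinal} (hX : J X) :
    supNS κ J X :=
  ⟨hJ.1 X hX, X, Ioo 0 κ.ord, hX, isClubIn_Ioo hunc (isSuccLimit_ord hunc.le).bot_lt,
    inter_subset_left⟩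

lemma supNS_of_NS (hJ : J ∅) {X : Set Ordinal} (hX : NS κ X) : supNS κ J X :=
  let ⟨hXκ, C, hC, hXC⟩ := hX
  ⟨hXκ, ∅, C, hJ, hC, hXC.subset⟩

lemma isIdeal_supNS (hreg : κ.IsRegular) (hunc : ℵ₀ < κ) (hJ : IsIdeal κ J) :
    IsIdeal κ (supNS κ J) := by
  refine ⟨fun X hX => hX.1, ?_, ?_, fun ξ hξ => supNS_of_mem hunc hJ (hJ.2.2.2.1 ξ hξ), ?_⟩
  · rintro X Z ⟨hX, Y, C, hY, hC, hXC⟩ hZX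
    exact ⟨hZX.trans hX, Y, C, hY, hC, (inter_subset_inter_left C hZX).trans hXC⟩
  · rintro X Z ⟨hX, Y₁, C₁, hY₁, hC₁, h₁⟩ ⟨hZ, Y₂, C₂, hY₂, hC₂, h₂⟩
    refine ⟨union_subset hX hZ, Y₁ ∪ Y₂, C₁ ∩ C₂, hJ.2.2.1 _ _ hY₁ hY₂,
      hC₁.inter hreg hunc hC₂, ?_⟩
    rintro x ⟨hx | hx, hx₁, hx₂⟩
    exacts [Or.inl (h₁ ⟨hx, hx₁⟩), Or.inr (h₂ ⟨hx, hx₂⟩)]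
  · intro θ hθ X hX
    choose hXκ Y C hY hC hXC using hX
    refine ⟨iUnion₂_subset fun α _ => hXκ α, ⋃ α ∈ Iio θ, Y α, diagInter κ C ∩ Ioo θ κ.ord,
      hJ.2.2.2.2 θ hθ Y hY,
      (isClubIn_diagInter hreg hunc hC).inter hreg hunc (isClubIn_Ioo hunc (lt_ord.2 hθ)), ?_⟩
    rintro x ⟨hx, ⟨-, hxC⟩, hθx, -⟩
    obtain ⟨α, hα, hxα⟩ := mem_iUnion₂.1 hx
    exact mem_iUnion₂.2 ⟨α, hα, hXC α ⟨hxα, hxC α (mem_Iio.1 hα |>.trans hθx)⟩⟩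

lemma genIdeal_eq_supNS (hreg : κ.IsRegular) (hunc : ℵ₀ < κ) (hJ : IsIdeal κ J) :
    genIdeal κ (fun X => J X ∨ NS κ X) = supNS κ J := by
  funext X
  refine propext ⟨fun hX => hX _ (isIdeal_supNS hreg hunc hJ) fun Y hY =>
    hY.elim (supNS_of_mem hunc hJ) (supNS_of_NS (hJ.empty_mem (isSuccLimit_ord hunc.le).bot_lt)),
    ?_⟩
  rintro ⟨hX, Y, C, hY, hC, hXC⟩ K hK hgen
  have hNS : NS κ (X \ C) := ⟨sdiff_subset.trans hX, C, hC, sdiff_inter_self⟩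
  refine hK.2.1 _ _ (hK.2.2.1 _ _ (hgen Y (Or.inl hY)) (hgen _ (Or.inr hNS))) fun x hx => ?_
  by_cases hxC : x ∈ C
  exacts [Or.inl (hXC ⟨hx, hxC⟩), Or.inr ⟨hx, hxC⟩]

lemma proper_supNS (hunc : ℵ₀ < κ) (hJ : IsIdeal κ J) (hpl : Pleasant J) (hprop : Proper κ J) :
    Proper κ (supNS κ J) := by
  rintro ⟨-, Y, C, hY, hC, hCY⟩
  exact hprop (hpl.Iio_ord_mem_of_isClubIn hJ (isSuccLimit_ord hunc.le).bot_lt hC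
    (hJ.2.1 _ _ hY fun c hc => hCY ⟨hC.1 hc, hc⟩))

lemma supNS_diagU (hreg : κ.IsRegular) (hunc : ℵ₀ < κ) (hJ : IsIdeal κ J) (hpl : Pleasant J)
    {Y : Ordinal → Set Ordinal} (hY : ∀ α, J (Y α)) : supNS κ J (diagU (Iio κ.ord) Y) := by
  have hκ : (0 : Ordinal) < κ.ord := (isSuccLimit_ord hunc.le).bot_lt
  refine ⟨fun ξ ⟨α, _, _, hξ⟩ => hJ.1 _ (hY α) hξ, ?_⟩
  by_cases hA : ∃ A, J A ∧ ∀ β < κ.ord, ∃ a ∈ A, β < a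
  · obtain ⟨A, hAJ, hA⟩ := hA
    set g := nextAbove A
    -- Indexing by `Iio (g a)` rather than `Iio a` keeps every set of the family in `J`,
    -- also for `a ≥ κ`; still `α < g α < g (g α)`.
    have hgκ : ∀ β, g β < κ.ord := nextAbove_lt (hJ.1 A hAJ) hκ
    refine ⟨diagU A fun a => ⋃ α ∈ Iio (g a), Y α, diagInter κ fun α => Ioo (g α) κ.ord,
      hpl A hAJ _ fun a => hJ.2.2.2.2 _ (lt_ord.1 (hgκ a)) Y hY,
      isClubIn_diagInter hreg hunc fun α => isClubIn_Ioo hunc (hgκ α), ?_⟩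
    rintro ξ ⟨⟨α, hαξ, hα, hξα⟩, -, hξg⟩
    obtain ⟨hgA, hαg⟩ := nextAbove_spec (hA α hα)
    exact ⟨g α, (hξg α hαξ).1, hgA,
      mem_biUnion (hαg.trans (nextAbove_spec (hA _ (hgκ α))).2) hξα⟩
  · push Not at hA
    choose g hgκ hg using fun α => hA (Y α) (hY α)
    refine ⟨∅, diagInter κ fun α => Ioo (g α) κ.ord, hJ.empty_mem hκ,
      isClubIn_diagInter hreg hunc fun α => isClubIn_Ioo hunc (hgκ α), ?_⟩
    rintro ξ ⟨⟨α, hαξ, -, hξα⟩, -, hξg⟩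
    exact ((hg α ξ hξα).trans_lt (hξg α hαξ).1).false

lemma normal_supNS (hreg : κ.IsRegular) (hunc : ℵ₀ < κ) (hJ : IsIdeal κ J) (hpl : Pleasant J) :
    Normal κ (supNS κ J) := by
  intro X hX
  choose hXκ Y C hY hC hXC using hX
  obtain ⟨-, Y', D, hY', hD, hYD⟩ := supNS_diagU hreg hunc hJ hpl hY
  refine ⟨fun ξ ⟨α, _, _, hξ⟩ => hXκ α hξ, Y', diagInter κ C ∩ D, hY',
    (isClubIn_diagInter hreg hunc hC).inter hreg hunc hD, ?_⟩
  rintro ξ ⟨⟨α, hαξ, hα, hξα⟩, ⟨-, hξC⟩, hξD⟩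
  exact hYD ⟨⟨α, hαξ, hα, hXC α ⟨hξα, hξC α hαξ⟩⟩, hξD⟩

end Ideals

/-- Every proper pleasant ideal is subnormal: the ideal generated by `I ∪ NS κ`
is a proper normal ideal extending `I`. -/
theorem stmt1 (κ : Cardinal.{0}) (hreg : κ.IsRegular) (hunc : Cardinal.aleph0 < κ)
    (J : Set Ordinal.{0} → Prop) (hJ : IsIdeal κ J) (hpl : Pleasant J)
    (hprop : Proper κ J) :
    Proper κ (genIdeal κ (fun X => J X ∨ NS κ X)) ∧
    Normal κ (genIdeal κ (fun X => J X ∨ NS κ X)) ∧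
    (∀ X, J X → genIdeal κ (fun X => J X ∨ NS κ X) X) := by
  rw [genIdeal_eq_supNS hreg hunc hJ]
  exact ⟨proper_supNS hunc hJ hpl hprop, normal_supNS hreg hunc hJ hpl,
    fun _ => supNS_of_mem hunc hJ⟩

end PaperIdeals
end

section
/- An ideal I on a regular uncountable cardinal κ is subpleasant if and only if it is subnormal. -/
open Set

namespace PaperIdeals

/-! A normal ideal is pleasant, since `∇_{α ∈ A} X_α ⊆ ∇_{α < κ} X_α`. Conversely, a proper pleasant
ideal `K` sits inside the normal ideal it generates, whose members are the sets covered, up to `0`,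
by a diagonal union of members of `K`. That ideal is proper: if `κ ⊆ {0} ∪ ∇_{α<κ} F_α`, every
`ξ < κ` reaches `0` by finitely many regressive steps `ξ ∈ F_α`, `α < ξ`, so `κ` is the countable
union of the iterates `C₀ = {0}`, `Cₙ₊₁ = {0} ∪ ∇_{α ∈ Cₙ} F_α`, which lie in `K` by pleasantness. -/

section NormalClosure

variable {κ : Cardinal.{0}} {K : Set Ordinal.{0} → Prop}

theorem diagU_mono {A B : Set Ordinal.{0}} {X Y : Ordinal.{0} → Set Ordinal.{0}} (hAB : A ⊆ B)
    (hXY : ∀ α, X α ⊆ Y α) : diagU A X ⊆ diagU B Y :=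
  fun _ ⟨α, hαξ, hα, hξ⟩ => ⟨α, hαξ, hAB hα, hXY α hξ⟩

theorem diagU_diagU_subset (A : Set Ordinal.{0}) (F : Ordinal.{0} → Ordinal.{0} → Set Ordinal.{0}) :
    diagU A (fun α => diagU A (F α)) ⊆
      diagU A fun γ => ⋃ p ∈ Iio (γ + 1), ⋃ q ∈ Iio (γ + 1), F p q := by
  rintro ξ ⟨α, hαξ, hα, β, hβξ, hβ, hξ⟩
  refine ⟨max α β, max_lt hαξ hβξ, ?_, mem_biUnion (Order.lt_add_one_iff.2 (le_max_left α β))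
    (mem_biUnion (Order.lt_add_one_iff.2 (le_max_right α β)) hξ)⟩
  rcases max_choice α β with h | h <;> rw [h] <;> assumption

theorem Normal.pleasant (hK : IsIdeal κ K) (hn : Normal κ K) : Pleasant K :=
  fun A hA X hX => hK.2.1 _ _ (hn X hX) (diagU_mono (hK.1 A hA) fun _ => subset_rfl)

theorem IsIdeal.empty (hK : IsIdeal κ K) (hκ : 0 < κ.ord) : K ∅ :=
  hK.2.1 _ _ (hK.2.2.2.1 0 hκ) (empty_subset _)

theorem IsIdeal.iUnion_nat (hK : IsIdeal κ K) (hκ : Cardinal.aleph0 < κ)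
    {C : ℕ → Set Ordinal.{0}} (hC : ∀ n, K (C n)) : K (⋃ n, C n) := by
  have hω : Ordinal.omega0.card < κ := by rwa [Ordinal.card_omega0]
  have h0 : 0 < κ.ord := (Cardinal.isSuccLimit_ord hκ.le).bot_lt
  let D : Ordinal.{0} → Set Ordinal.{0} := Function.extend Nat.cast C fun _ => ∅
  have hDC : ∀ n : ℕ, D n = C n := Nat.cast_injective.extend_apply C _
  have hD : ∀ o, K (D o) := by
    intro o
    by_cases ho : ∃ n : ℕ, (n : Ordinal) = o
    · obtain ⟨n, rfl⟩ := ho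
      exact hDC n ▸ hC n
    · have hDo : D o = ∅ := Function.extend_apply' C _ o ho
      exact hDo ▸ hK.empty h0
  refine hK.2.1 _ _ (hK.2.2.2.2 _ hω D hD) (iUnion_subset fun n => ?_)
  exact hDC n ▸ subset_biUnion_of_mem (u := D) (Ordinal.natCast_lt_omega0 n)

/-- `0` is added by hand because it lies in no diagonal union. -/
def normalClosure (κ : Cardinal.{0}) (K : Set Ordinal.{0} → Prop) (X : Set Ordinal.{0}) : Prop :=
  X ⊆ Iio κ.ord ∧ ∃ F : Ordinal.{0} → Set Ordinal.{0},
    (∀ α, K (F α)) ∧ X ⊆ insert 0 (diagU (Iio κ.ord) F)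

theorem IsIdeal.le_normalClosure (hK : IsIdeal κ K) {X : Set Ordinal.{0}} (hX : K X) :
    normalClosure κ K X := by
  refine ⟨hK.1 X hX, fun _ => X, fun _ => hX, fun ξ hξ => ?_⟩
  rcases eq_or_ne ξ 0 with h | h
  · exact Or.inl h
  · have hξ0 : 0 < ξ := pos_iff_ne_zero.2 h
    exact Or.inr ⟨0, hξ0, hξ0.trans (hK.1 X hX hξ), hξ⟩

theorem IsIdeal.isIdeal_normalClosure (hK : IsIdeal κ K) : IsIdeal κ (normalClosure κ K) := by
  refine ⟨fun X hX => hX.1, ?_, ?_, fun ξ hξ => hK.le_normalClosure (hK.2.2.2.1 ξ hξ), ?_⟩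
  · rintro X Y ⟨hXκ, F, hF, hXF⟩ hYX
    exact ⟨hYX.trans hXκ, F, hF, hYX.trans hXF⟩
  · rintro X Y ⟨hXκ, F, hF, hXF⟩ ⟨hYκ, G, hG, hYG⟩
    refine ⟨union_subset hXκ hYκ, fun α => F α ∪ G α, fun α => hK.2.2.1 _ _ (hF α) (hG α), ?_⟩
    exact union_subset
      (hXF.trans (insert_subset_insert (diagU_mono subset_rfl fun _ => subset_union_left)))
      (hYG.trans (insert_subset_insert (diagU_mono subset_rfl fun _ => subset_union_right)))
  · intro θ hθ X hX
    choose hXκ F hF hXF using hX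
    refine ⟨iUnion₂_subset fun α _ => hXκ α, fun β => ⋃ α ∈ Iio θ, F α β,
      fun β => hK.2.2.2.2 θ hθ _ fun α => hF α β, iUnion₂_subset fun α hα => ?_⟩
    exact (hXF α).trans (insert_subset_insert (diagU_mono subset_rfl fun β =>
      subset_biUnion_of_mem (u := fun α => F α β) hα))

theorem IsIdeal.normal_normalClosure (hK : IsIdeal κ K) (hκ : Cardinal.aleph0 ≤ κ) :
    Normal κ (normalClosure κ K) := by
  intro X hX
  choose hXκ F hF hXF using hX
  have hlim := Cardinal.isSuccLimit_ord hκ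
  set G : Ordinal.{0} → Set Ordinal.{0} := fun γ =>
    if γ < κ.ord then ⋃ p ∈ Iio (γ + 1), ⋃ q ∈ Iio (γ + 1), F p q else ∅
  have hG : ∀ γ, K (G γ) := by
    intro γ
    by_cases hγ : γ < κ.ord
    · have hcard : (γ + 1).card < κ := Cardinal.lt_ord.1 (hlim.succ_lt hγ)
      simp only [G, if_pos hγ]
      exact hK.2.2.2.2 _ hcard _ fun p => hK.2.2.2.2 _ hcard _ fun q => hF p q
    · simp only [G, if_neg hγ]
      exact hK.empty hlim.bot_lt
  refine ⟨fun ξ ⟨α, _, _, hξ⟩ => hXκ α hξ, G, hG, ?_⟩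
  calc diagU (Iio κ.ord) X
      ⊆ diagU (Iio κ.ord) fun α => diagU (Iio κ.ord) (F α) := by
        rintro ξ ⟨α, hαξ, hα, hξ⟩
        exact ⟨α, hαξ, hα, (hXF α hξ).resolve_left (zero_le.trans_lt hαξ).ne'⟩
    _ ⊆ diagU (Iio κ.ord) fun γ => ⋃ p ∈ Iio (γ + 1), ⋃ q ∈ Iio (γ + 1), F p q :=
        diagU_diagU_subset _ F
    _ ⊆ diagU (Iio κ.ord) G := by
        rintro ξ ⟨γ, hγξ, hγ, hξ⟩
        exact ⟨γ, hγξ, hγ, by simpa only [G, if_pos (mem_Iio.1 hγ)] using hξ⟩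
    _ ⊆ insert 0 (diagU (Iio κ.ord) G) := subset_insert _ _

def iterDiag (F : Ordinal.{0} → Set Ordinal.{0}) : ℕ → Set Ordinal.{0}
  | 0 => {0}
  | n + 1 => insert 0 (diagU (iterDiag F n) F)

theorem subset_iUnion_iterDiag {S : Set Ordinal.{0}} {F : Ordinal.{0} → Set Ordinal.{0}}
    (hS : S ⊆ insert 0 (diagU S F)) : S ⊆ ⋃ n, iterDiag F n := by
  intro ξ
  induction ξ using WellFoundedLT.induction with
  | _ ξ ih =>
    intro hξ
    rcases hS hξ with rfl | ⟨α, hαξ, hα, hξα⟩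
    · exact mem_iUnion.2 ⟨0, rfl⟩
    · obtain ⟨n, hn⟩ := mem_iUnion.1 (ih α hαξ hα)
      exact mem_iUnion.2 ⟨n + 1, Or.inr ⟨α, hαξ, hn, hξα⟩⟩

theorem IsIdeal.iterDiag_mem (hK : IsIdeal κ K) (hpl : Pleasant K) (hκ : 0 < κ.ord)
    {F : Ordinal.{0} → Set Ordinal.{0}} (hF : ∀ α, K (F α)) : ∀ n, K (iterDiag F n)
  | 0 => hK.2.2.2.1 0 hκ
  | n + 1 => by
    rw [iterDiag, insert_eq]
    exact hK.2.2.1 _ _ (hK.2.2.2.1 0 hκ) (hpl _ (hK.iterDiag_mem hpl hκ hF n) F hF)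

theorem IsIdeal.proper_normalClosure (hK : IsIdeal κ K) (hpl : Pleasant K)
    (hκ : Cardinal.aleph0 < κ) (hp : Proper κ K) : Proper κ (normalClosure κ K) := by
  rintro ⟨-, F, hF, hcov⟩
  have h0 : 0 < κ.ord := (Cardinal.isSuccLimit_ord hκ.le).bot_lt
  exact hp (hK.2.1 _ _ (hK.iUnion_nat hκ (hK.iterDiag_mem hpl h0 hF))
    (subset_iUnion_iterDiag hcov))

end NormalClosure

theorem stmt2_general (κ : Cardinal.{0}) (hunc : Cardinal.aleph0 < κ)
    (J : Set Ordinal.{0} → Prop) :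
    (∃ K, IsIdeal κ K ∧ Proper κ K ∧ Pleasant K ∧ ∀ X, J X → K X) ↔
    (∃ K, IsIdeal κ K ∧ Proper κ K ∧ Normal κ K ∧ ∀ X, J X → K X) := by
  constructor
  · rintro ⟨K, hK, hKp, hKpl, hJK⟩
    exact ⟨normalClosure κ K, hK.isIdeal_normalClosure, hK.proper_normalClosure hKpl hunc hKp,
      hK.normal_normalClosure hunc.le, fun X hX => hK.le_normalClosure (hJK X hX)⟩
  · rintro ⟨K, hK, hKp, hKn, hJK⟩
    exact ⟨K, hK, hKp, hKn.pleasant hK, hJK⟩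

/-- `I` is subpleasant iff `I` is subnormal. -/
theorem stmt2 (κ : Cardinal.{0}) (hreg : κ.IsRegular) (hunc : Cardinal.aleph0 < κ)
    (J : Set Ordinal.{0} → Prop) (hJ : IsIdeal κ J) :
    (∃ K, IsIdeal κ K ∧ Proper κ K ∧ Pleasant K ∧ ∀ X, J X → K X) ↔
    (∃ K, IsIdeal κ K ∧ Proper κ K ∧ Normal κ K ∧ ∀ X, J X → K X) :=
  stmt2_general κ hunc J

end PaperIdeals
end

section
/- If I is an ideal on a regular uncountable cardinal κ such that the restriction I↾A is pleasant for every A ∈ I⁺, then I is normal. -/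
open Set

namespace PaperIdeals

/-! Let `D` be the diagonal union of the `X α` and pick `g ξ < ξ` with `ξ ∈ X (g ξ)` for `ξ ∈ D`.
Since `g` is regressive, `D` can be two-coloured (by the parity of the length of the `g`-chain) so
that `g` always changes colour. Each colour class `B` then lies in the diagonal union of the `X α`
over the other colour, a set disjoint from `B` and hence in `I ↾ B`; if `B ∉ I`, pleasantness of
`I ↾ B` would put `B` itself into `I ↾ B`, that is into `I`. So `D` is the union of two sets in `I`. -/

theorem exists_set_mem_iff_not_mem {α : Type*} [LT α] [WellFoundedLT α] (g : α → α)
    (D : Set α) (hg : ∀ x ∈ D, g x < x) : ∃ A : Set α, ∀ x ∈ D, (g x ∈ A ↔ x ∉ A) := by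
  classical
  let c : α → Bool :=
    wellFounded_lt.fix fun x rec => if hx : x ∈ D then !rec (g x) (hg x hx) else false
  have hc : ∀ x ∈ D, c x = !c (g x) := fun x hx =>
    (wellFounded_lt.fix_eq _ x).trans (dif_pos hx)
  refine ⟨{x | c x = true}, fun x hx => ?_⟩
  simp only [mem_ofPred_eq, hc x hx]
  cases c (g x) <;> simp

theorem IsIdeal.mem_of_subset_diagU {κ : Cardinal.{0}} {J : Set Ordinal.{0} → Prop}
    (hJ : IsIdeal κ J) (h : ∀ A, Pos κ J A → Pleasant (restrict κ J A))
    {A B : Set Ordinal.{0}} {X : Ordinal.{0} → Set Ordinal.{0}} (hA : A ⊆ Iio κ.ord)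
    (hB : B ⊆ Iio κ.ord) (hAB : J (A ∩ B)) (hX : ∀ α, J (X α)) (hBX : B ⊆ diagU A X) : J B := by
  by_contra hB'
  have hAr : restrict κ J B A := ⟨hA, hAB⟩
  have hXr : ∀ α, restrict κ J B (X α) :=
    fun α => ⟨hJ.1 _ (hX α), hJ.2.1 _ _ (hX α) inter_subset_left⟩
  exact hB' (hJ.2.1 _ _ (h B ⟨hB, hB'⟩ A hAr X hXr).2 (subset_inter hBX subset_rfl))

theorem stmt3_general (κ : Cardinal.{0})
    (J : Set Ordinal.{0} → Prop) (hJ : IsIdeal κ J)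
    (h : ∀ A, Pos κ J A → Pleasant (restrict κ J A)) :
    Normal κ J := by
  intro X hX
  set D := diagU (Iio κ.ord) X
  choose! g hg using fun ξ (hξ : ξ ∈ D) => hξ
  obtain ⟨A, hA⟩ := exists_set_mem_iff_not_mem g D fun ξ hξ => (hg ξ hξ).1
  have hD : D ⊆ Iio κ.ord := fun ξ ⟨α, _, _, hξ⟩ => hJ.1 _ (hX α) hξ
  have hempty : J ∅ := hJ.2.1 _ _ (hX 0) (empty_subset _)
  have hcolour : ∀ C, (∀ ξ ∈ D ∩ C, g ξ ∉ C) → J (D ∩ C) := fun C hC =>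
    hJ.mem_of_subset_diagU h (A := Iio κ.ord \ C) sdiff_subset (inter_subset_left.trans hD)
      (hJ.2.1 _ _ hempty fun _ ⟨⟨_, hξC⟩, _, hξC'⟩ => hξC hξC') hX
      fun ξ hξ => ⟨g ξ, (hg ξ hξ.1).1, ⟨(hg ξ hξ.1).2.1, hC ξ hξ⟩, (hg ξ hξ.1).2.2⟩
  have hDA : J (D ∩ A) := hcolour A fun ξ hξ hgA => (hA ξ hξ.1).1 hgA hξ.2
  have hDA' : J (D ∩ Aᶜ) := hcolour Aᶜ fun ξ hξ hgA => hgA ((hA ξ hξ.1).2 hξ.2)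
  simpa only [inter_union_compl] using hJ.2.2.1 _ _ hDA hDA'

/-- If `I ↾ A` is pleasant for every `A ∈ I⁺`, then `I` is normal. -/
theorem stmt3 (κ : Cardinal.{0}) (hreg : κ.IsRegular) (hunc : Cardinal.aleph0 < κ)
    (J : Set Ordinal.{0} → Prop) (hJ : IsIdeal κ J) (hprop : Proper κ J)
    (h : ∀ A, Pos κ J A → Pleasant (restrict κ J A)) :
    Normal κ J :=
  stmt3_general κ J hJ h

end PaperIdeals
end

section
/- An ideal I on a regular uncountable cardinal κ is pleasant if and only if it is densely pleasant, i.e., for every A ∈ I⁺ there exists B ∈ (I↾A)⁺ such that I↾B is pleasant. -/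
open Set

namespace PaperIdeals

/-!
A pleasant `I` is densely pleasant with the witness `B = κ`, since `I ↾ κ = I`. Conversely, if a
diagonal union `D = ∇_{α ∈ Q} X_α` of sets in `I` were `I`-positive, take `B` with `B ∩ D ∉ I` and
`I ↾ B` pleasant: `Q` and all `X_α` lie in `I ↾ B`, hence so does `D`, i.e. `B ∩ D ∈ I`.
-/

theorem diagU_subset {A S : Set Ordinal.{0}} {X : Ordinal.{0} → Set Ordinal.{0}}
    (hX : ∀ α, X α ⊆ S) : diagU A X ⊆ S := by
  rintro ξ ⟨α, -, -, hξ⟩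
  exact hX α hξ

theorem diagU_inter_Iio (A : Set Ordinal.{0}) (X : Ordinal.{0} → Set Ordinal.{0})
    (θ : Ordinal.{0}) :
    diagU A X ∩ Iio θ = diagU (A ∩ Iio θ) (fun α => X α ∩ Iio θ) := by
  ext ξ
  constructor
  · rintro ⟨⟨α, hαξ, hαA, hξ⟩, hξθ⟩
    exact ⟨α, hαξ, ⟨hαA, hαξ.trans hξθ⟩, hξ, hξθ⟩
  · rintro ⟨α, hαξ, ⟨hαA, -⟩, hξ, hξθ⟩
    exact ⟨⟨α, hαξ, hαA, hξ⟩, hξθ⟩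

section

variable {κ : Cardinal.{0}} {J : Set Ordinal.{0} → Prop}

theorem Pleasant.restrict_Iio (hJ : Pleasant J) : Pleasant (restrict κ J (Iio κ.ord)) := by
  intro Q hQ X hX
  refine ⟨diagU_subset fun α => (hX α).1, ?_⟩
  rw [diagU_inter_Iio]
  exact hJ _ hQ.2 _ fun α => (hX α).2

theorem Pos.Iio_restrict {A : Set Ordinal.{0}} (hA : Pos κ J A) :
    Pos κ (restrict κ J A) (Iio κ.ord) := by
  refine ⟨subset_rfl, fun h => hA.2 ?_⟩
  simpa only [inter_eq_right.mpr hA.1] using h.2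

theorem IsIdeal.restrict_of_mem (hJ : IsIdeal κ J) (A : Set Ordinal.{0}) {X : Set Ordinal.{0}}
    (hX : J X) : restrict κ J A X :=
  ⟨hJ.1 X hX, hJ.2.1 X _ hX inter_subset_left⟩

theorem IsIdeal.pleasant_of_dense (hJ : IsIdeal κ J)
    (hdense : ∀ A, Pos κ J A → ∃ B, Pos κ (restrict κ J A) B ∧ Pleasant (restrict κ J B)) :
    Pleasant J := by
  intro Q hQ X hX
  by_contra hD
  obtain ⟨B, hBpos, hBpleasant⟩ :=
    hdense (diagU Q X) ⟨diagU_subset fun α => hJ.1 _ (hX α), hD⟩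
  have hDB : restrict κ J B (diagU Q X) :=
    hBpleasant Q (hJ.restrict_of_mem B hQ) X fun α => hJ.restrict_of_mem B (hX α)
  exact hBpos.2 ⟨hBpos.1, inter_comm B _ ▸ hDB.2⟩

end

theorem stmt4_general (κ : Cardinal.{0}) (J : Set Ordinal.{0} → Prop) (hJ : IsIdeal κ J) :
    Pleasant J ↔
      ∀ A, Pos κ J A → ∃ B, Pos κ (restrict κ J A) B ∧ Pleasant (restrict κ J B) :=
  ⟨fun hP _ hA => ⟨_, hA.Iio_restrict, hP.restrict_Iio⟩, hJ.pleasant_of_dense⟩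

/-- `I` is pleasant iff `I` is densely pleasant. -/
theorem stmt4 (κ : Cardinal.{0}) (hreg : κ.IsRegular) (hunc : Cardinal.aleph0 < κ)
    (J : Set Ordinal.{0} → Prop) (hJ : IsIdeal κ J) :
    Pleasant J ↔
      ∀ A, Pos κ J A → ∃ B, Pos κ (restrict κ J A) B ∧ Pleasant (restrict κ J B) :=
  stmt4_general κ J hJ

end PaperIdeals
end

section
/- An ideal I on κ is pleasant if and only if for every A ∈ I⁺ and every regressive I-small function f : A → κ, the image f[A] belongs to I⁺. -/
/-!
Away from `0`, a set `A` is the diagonal union, indexed by `f[A]`, of the fibres of a regressive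
`f`; so if the fibres are small and `f[A]` is small, pleasantness makes `A` small. Conversely, a
diagonal union `D = ∇_{α ∈ A} X_α` carries the regressive function choosing an index `α < ξ` with
`ξ ∈ X_α`: its fibres lie in the `X_α` and its image lies in `A`, so if `D` were positive its image
would be positive although contained in `A`.
-/

open Set

namespace PaperIdeals

namespace IsIdeal

variable {κ : Cardinal.{0}} {J : Set Ordinal.{0} → Prop}

theorem subset_Iio (hJ : IsIdeal κ J) {X : Set Ordinal.{0}} (hX : J X) : X ⊆ Iio κ.ord :=
  hJ.1 X hX

theorem mono (hJ : IsIdeal κ J) {X Y : Set Ordinal.{0}} (hX : J X) (hYX : Y ⊆ X) : J Y :=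
  hJ.2.1 X Y hX hYX

theorem union (hJ : IsIdeal κ J) {X Y : Set Ordinal.{0}} (hX : J X) (hY : J Y) : J (X ∪ Y) :=
  hJ.2.2.1 X Y hX hY

theorem singleton (hJ : IsIdeal κ J) {ξ : Ordinal.{0}} (hξ : ξ < κ.ord) : J {ξ} :=
  hJ.2.2.2.1 ξ hξ

end IsIdeal

theorem diff_zero_subset_diagU_fibers {A : Set Ordinal.{0}} {f : Ordinal.{0} → Ordinal.{0}}
    (hf : ∀ α ∈ A, α ≠ 0 → f α < α) :
    A \ {0} ⊆ diagU (f '' A) (fun ξ => {α | α ∈ A ∧ f α = ξ}) :=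
  fun α ⟨hα, hα0⟩ => ⟨f α, hf α hα hα0, mem_image_of_mem f hα, hα, rfl⟩

theorem Pleasant.pos_image {κ : Cardinal.{0}} {J : Set Ordinal.{0} → Prop} (hJ : IsIdeal κ J)
    (hpl : Pleasant J) {A : Set Ordinal.{0}} {f : Ordinal.{0} → Ordinal.{0}} (hA : Pos κ J A)
    (hfκ : ∀ α ∈ A, f α < κ.ord) (hf : ∀ α ∈ A, α ≠ 0 → f α < α)
    (hsmall : ∀ ξ, J {α | α ∈ A ∧ f α = ξ}) : Pos κ J (f '' A) := by
  refine ⟨image_subset_iff.2 hfκ, fun hIm => hA.2 ?_⟩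
  have hdiag := hpl _ hIm _ hsmall
  have hzero : J (A ∩ {0}) := by
    by_cases h0 : 0 ∈ A
    · exact hJ.mono (hJ.singleton (hA.1 h0)) inter_subset_right
    · exact hJ.mono hdiag (by simp [inter_singleton_eq_empty.2 h0])
  rw [← inter_union_sdiff A {0}]
  exact hJ.union hzero (hJ.mono hdiag (diff_zero_subset_diagU_fibers hf))

open Classical in
noncomputable def diagIndex (A : Set Ordinal.{0}) (X : Ordinal.{0} → Set Ordinal.{0})
    (ξ : Ordinal.{0}) : Ordinal.{0} :=
  if h : ξ ∈ diagU A X then h.choose else 0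

theorem diagIndex_spec {A : Set Ordinal.{0}} {X : Ordinal.{0} → Set Ordinal.{0}} {ξ : Ordinal.{0}}
    (hξ : ξ ∈ diagU A X) :
    diagIndex A X ξ < ξ ∧ diagIndex A X ξ ∈ A ∧ ξ ∈ X (diagIndex A X ξ) := by
  rw [diagIndex, dif_pos hξ]
  exact hξ.choose_spec

theorem image_diagIndex_subset (A : Set Ordinal.{0}) (X : Ordinal.{0} → Set Ordinal.{0}) :
    diagIndex A X '' diagU A X ⊆ A := by
  rintro _ ⟨ξ, hξ, rfl⟩
  exact (diagIndex_spec hξ).2.1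

theorem diagIndex_fiber_subset (A : Set Ordinal.{0}) (X : Ordinal.{0} → Set Ordinal.{0})
    (α : Ordinal.{0}) : {ξ | ξ ∈ diagU A X ∧ diagIndex A X ξ = α} ⊆ X α := by
  rintro ξ ⟨hξ, rfl⟩
  exact (diagIndex_spec hξ).2.2

theorem diagU_subset_Iio {κ : Cardinal.{0}} {J : Set Ordinal.{0} → Prop} (hJ : IsIdeal κ J)
    {A : Set Ordinal.{0}} {X : Ordinal.{0} → Set Ordinal.{0}} (hX : ∀ α, J (X α)) :
    diagU A X ⊆ Iio κ.ord :=
  fun _ ⟨α, _, _, hξ⟩ => hJ.subset_Iio (hX α) hξ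

theorem pleasant_of_forall_pos_image {κ : Cardinal.{0}} {J : Set Ordinal.{0} → Prop}
    (hJ : IsIdeal κ J)
    (H : ∀ (A : Set Ordinal.{0}) (f : Ordinal.{0} → Ordinal.{0}), Pos κ J A →
        (∀ α ∈ A, f α < κ.ord) → (∀ α ∈ A, α ≠ 0 → f α < α) →
        (∀ ξ : Ordinal.{0}, J {α | α ∈ A ∧ f α = ξ}) → Pos κ J (f '' A)) :
    Pleasant J := by
  intro A hA X hX
  by_contra hD
  have hDκ := diagU_subset_Iio hJ (A := A) hX
  have hIm := H _ (diagIndex A X) ⟨hDκ, hD⟩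
    (fun ξ hξ => (diagIndex_spec hξ).1.trans (hDκ hξ))
    (fun ξ hξ _ => (diagIndex_spec hξ).1)
    (fun α => hJ.mono (hX α) (diagIndex_fiber_subset A X α))
  exact hIm.2 (hJ.mono hA (image_diagIndex_subset A X))

theorem stmt5_general (κ : Cardinal.{0})
    (J : Set Ordinal.{0} → Prop) (hJ : IsIdeal κ J) :
    Pleasant J ↔
      ∀ (A : Set Ordinal.{0}) (f : Ordinal.{0} → Ordinal.{0}), Pos κ J A →
        (∀ α ∈ A, f α < κ.ord) →
        (∀ α ∈ A, α ≠ 0 → f α < α) →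
        (∀ ξ : Ordinal.{0}, J {α | α ∈ A ∧ f α = ξ}) →
        Pos κ J (f '' A) :=
  ⟨fun hpl _ _ hA hfκ hf hsmall => hpl.pos_image hJ hA hfκ hf hsmall,
    pleasant_of_forall_pos_image hJ⟩

/-- `I` is pleasant iff for every `A ∈ I⁺` and every regressive `I`-small
`f : A → κ`, the image `f[A]` is in `I⁺`. -/
theorem stmt5 (κ : Cardinal.{0}) (hreg : κ.IsRegular) (hunc : Cardinal.aleph0 < κ)
    (J : Set Ordinal.{0} → Prop) (hJ : IsIdeal κ J) :
    Pleasant J ↔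
      ∀ (A : Set Ordinal.{0}) (f : Ordinal.{0} → Ordinal.{0}), Pos κ J A →
        (∀ α ∈ A, f α < κ.ord) →
        (∀ α ∈ A, α ≠ 0 → f α < α) →
        (∀ ξ : Ordinal.{0}, J {α | α ∈ A ∧ f α = ξ}) →
        Pos κ J (f '' A) :=
  stmt5_general κ J hJ

end PaperIdeals
end

section
/- If κ is a regular uncountable limit cardinal, then Węglorz's ideal J_κ is not prepleasant: there exist a set L ∈ J_κ and bounded sets (A_α)_{α<κ} such that L ∪ ∇_{α∈L} A_α ∉ J_κ. -/
open Set

/-!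
Take `L = {λ + 1 : ℵ₀ ≤ λ < κ}`, on which the predecessor map is injective, and `A_{λ+1} = λ⁺`.
The diagonal union then contains every interval `(μ, μ⁺)` with `ℵ₀ ≤ μ < κ`. Given a regressive
`f` with fibres of size `≤ θ`, let `μ = max θ ℵ₀` and `ρ = μ⁺`. For each `β < ρ` the points
`α ∈ (μ, ρ)` with `f α ≤ β` number fewer than `ρ`, so by regularity they lie below some `b β < ρ`.
The closure point `γ = sup_n bⁿ(μ + 1) < ρ` lies in `(μ, ρ)`, and `f γ < bⁿ(μ + 1)` for some `n`
gives `γ < bⁿ⁺¹(μ + 1) ≤ γ`.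
-/

open Cardinal Ordinal

namespace Cardinal.IsRegular

universe u

theorem exists_lt_ord_subset_Iio {ρ : Cardinal.{u}} (hρ : ρ.IsRegular) {T : Set Ordinal.{u}}
    (hT : T ⊆ Iio ρ.ord) (hTcard : #T < Cardinal.lift.{u + 1} ρ) : ∃ b < ρ.ord, T ⊆ Iio b := by
  refine ⟨sSup ((· + 1) '' T), sSup_add_one_lt_of_lt_cof ?_ hT, fun α hα ↦ ?_⟩
  · rwa [← lift_cof, hρ.cof_ord]
  · have hbdd : BddAbove ((· + 1) '' T) :=
      ⟨ρ.ord, forall_mem_image.2 fun β hβ ↦ Order.add_one_le_of_lt (hT hβ)⟩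
    exact (lt_add_one α).trans_le (le_csSup hbdd (mem_image_of_mem _ hα))

end Cardinal.IsRegular

section RegressiveFibers

universe u

variable {ρ θ : Cardinal.{u}} {S : Set Ordinal.{u}} {f : Ordinal.{u} → Ordinal.{u}}

theorem mk_setOf_apply_le_lt (hρ : ℵ₀ ≤ ρ) (hθ : θ < ρ)
    (hfib : ∀ ξ, #{α // α ∈ S ∧ f α = ξ} ≤ lift.{u + 1} θ) {β : Ordinal.{u}} (hβ : β < ρ.ord) :
    #{α | α ∈ S ∧ f α ≤ β} < lift.{u + 1} ρ := by
  have hsub : {α | α ∈ S ∧ f α ≤ β} ⊆ ⋃ ξ : Iio (β + 1), {α | α ∈ S ∧ f α = ξ} :=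
    fun α hα ↦ mem_iUnion.2 ⟨⟨f α, Order.lt_add_one_iff.2 hα.2⟩, hα.1, rfl⟩
  refine (mk_le_mk_of_subset hsub).trans_lt ((mk_iUnion_le _).trans_lt ?_)
  have hfib_lt : ⨆ ξ : Iio (β + 1), #{α | α ∈ S ∧ f α = ξ} < lift.{u + 1} ρ :=
    (ciSup_le' fun ξ : Iio (β + 1) ↦ hfib ξ).trans_lt (Cardinal.lift_lt.2 hθ)
  refine mul_lt_of_lt (aleph0_le_lift.2 hρ) ?_ hfib_lt
  rw [Cardinal.mk_Iio_ordinal, Cardinal.lift_lt, ← lt_ord]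
  exact (isSuccLimit_ord hρ).add_one_lt hβ

theorem not_forall_mk_fiber_le_of_Ioo_subset (hρ : ρ.IsRegular) (hρω : ℵ₀ < ρ) (hθ : θ < ρ)
    {δ : Ordinal.{u}} (hδ : δ < ρ.ord) (hS : Ioo δ ρ.ord ⊆ S) (hf : ∀ α ∈ S, α ≠ 0 → f α < α) :
    ¬ ∀ ξ, #{α // α ∈ S ∧ f α = ξ} ≤ lift.{u + 1} θ := by
  intro hfib
  have hbound : ∀ β < ρ.ord, ∃ b < ρ.ord, ∀ α ∈ S, α < ρ.ord → f α ≤ β → α < b := by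
    intro β hβ
    let T := {α | α ∈ S ∧ α < ρ.ord ∧ f α ≤ β}
    have hT : #T < lift.{u + 1} ρ :=
      (mk_le_mk_of_subset (t := {α | α ∈ S ∧ f α ≤ β}) fun α hα ↦ ⟨hα.1, hα.2.2⟩).trans_lt
        (mk_setOf_apply_le_lt hρω.le hθ hfib hβ)
    obtain ⟨b, hb, hsub⟩ := hρ.exists_lt_ord_subset_Iio (T := T) (fun α hα ↦ hα.2.1) hT
    exact ⟨b, hb, fun α hαS hαρ hfα ↦ hsub ⟨hαS, hαρ, hfα⟩⟩
  choose! b hb_lt hb using hbound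
  set γ := nfp b (δ + 1)
  have hγρ : γ < ρ.ord :=
    nfp_lt_ord (by rwa [hρ.cof_ord]) hb_lt ((isSuccLimit_ord hρω.le).add_one_lt hδ)
  have hδγ : δ < γ := (lt_add_one δ).trans_le (le_nfp b _)
  have hγS : γ ∈ S := hS ⟨hδγ, hγρ⟩
  obtain ⟨n, hn⟩ := lt_nfp_iff.1 (hf γ hγS hδγ.ne_bot)
  have hγ_lt : γ < b^[n + 1] (δ + 1) := by
    rw [Function.iterate_succ_apply']
    exact hb _ ((iterate_le_nfp b _ n).trans_lt hγρ) γ hγS hγρ hn.le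
  exact (iterate_le_nfp b _ (n + 1)).not_gt hγ_lt

end RegressiveFibers

namespace PaperIdeals

variable {κ : Cardinal.{0}}

def cardOrdSuccs (κ : Cardinal.{0}) : Set Ordinal.{0} :=
  {x | ∃ c : Cardinal.{0}, ℵ₀ ≤ c ∧ c < κ ∧ x = c.ord + 1}

/-- The paper's `A_{λ+1} = (λ + 1, λ⁺)`; its part below `λ + 1` is irrelevant in a diagonal
union over `λ + 1`. -/
def nextCardIio (κ : Cardinal.{0}) (α : Ordinal.{0}) : Set Ordinal.{0} :=
  {ξ | ∃ c : Cardinal.{0}, ℵ₀ ≤ c ∧ c < κ ∧ α = c.ord + 1 ∧ ξ < (Order.succ c).ord}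

theorem cardOrdSuccs_subset_Iio (hκ : ℵ₀ ≤ κ) : cardOrdSuccs κ ⊆ Iio κ.ord := by
  rintro _ ⟨c, -, hc, rfl⟩
  exact (isSuccLimit_ord hκ).add_one_lt (ord_lt_ord.2 hc)

theorem weglorz_cardOrdSuccs (hκ : ℵ₀ ≤ κ) : Weglorz κ (cardOrdSuccs κ) := by
  refine ⟨cardOrdSuccs_subset_Iio hκ, Ordinal.pred, 1, one_lt_aleph0.trans_le hκ, ?_, fun ξ ↦ ?_⟩
  · rintro _ ⟨c, -, -, rfl⟩ -
    rw [pred_add_one]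
    exact lt_add_one _
  · rw [Cardinal.lift_one, le_one_iff_subsingleton]
    constructor
    rintro ⟨_, ⟨c₁, -, -, rfl⟩, h₁⟩ ⟨_, ⟨c₂, -, -, rfl⟩, h₂⟩
    rw [pred_add_one] at h₁ h₂
    simp only [h₁, h₂]

theorem bddIn_nextCardIio (hlim : Order.IsSuccLimit κ) (α : Ordinal.{0}) :
    BddIn κ (nextCardIio κ α) := by
  by_cases hα : ∃ c : Cardinal.{0}, ℵ₀ ≤ c ∧ c < κ ∧ α = c.ord + 1
  · obtain ⟨c, -, hc, rfl⟩ := hα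
    refine ⟨(Order.succ c).ord, ord_lt_ord.2 (hlim.succ_lt hc), ?_⟩
    rintro ξ ⟨c', -, -, hcc', hξ⟩
    rwa [ord_injective (Order.succ_injective hcc')]
  · refine ⟨0, ord_pos.2 hlim.bot_lt, ?_⟩
    rintro ξ ⟨c, hc₀, hc, hα', -⟩
    exact absurd ⟨c, hc₀, hc, hα'⟩ hα

theorem union_diagU_subset_Iio (hκ : ℵ₀ ≤ κ) (hlim : Order.IsSuccLimit κ) :
    cardOrdSuccs κ ∪ diagU (cardOrdSuccs κ) (nextCardIio κ) ⊆ Iio κ.ord := by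
  rintro ξ (hξ | ⟨-, -, -, c, -, hc, -, hξ⟩)
  · exact cardOrdSuccs_subset_Iio hκ hξ
  · exact hξ.trans (ord_lt_ord.2 (hlim.succ_lt hc))

theorem Ioo_subset_union_diagU {μ : Cardinal.{0}} (hμ : ℵ₀ ≤ μ) (hμκ : μ < κ) :
    Ioo μ.ord (Order.succ μ).ord ⊆ cardOrdSuccs κ ∪ diagU (cardOrdSuccs κ) (nextCardIio κ) := by
  rintro α ⟨hμα, hα⟩
  rcases (Order.add_one_le_of_lt hμα).lt_or_eq with hlt | rfl
  · exact Or.inr ⟨μ.ord + 1, hlt, ⟨μ, hμ, hμκ, rfl⟩, μ, hμ, hμκ, rfl, hα⟩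
  · exact Or.inl ⟨μ, hμ, hμκ, rfl⟩

theorem not_weglorz_union_diagU (hκ : ℵ₀ < κ) :
    ¬ Weglorz κ (cardOrdSuccs κ ∪ diagU (cardOrdSuccs κ) (nextCardIio κ)) := by
  rintro ⟨-, f, θ, hθκ, hf, hfib⟩
  have hμ : ℵ₀ ≤ max θ ℵ₀ := le_max_right _ _
  refine not_forall_mk_fiber_le_of_Ioo_subset (isRegular_succ hμ)
    (hμ.trans_lt (Order.lt_succ _)) ((le_max_left _ _).trans_lt (Order.lt_succ _))
    (ord_lt_ord.2 (Order.lt_succ _)) (Ioo_subset_union_diagU hμ (max_lt hθκ hκ)) hf hfib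

theorem stmt7_general (κ : Cardinal.{0}) (hunc : Cardinal.aleph0 < κ)
    (hlim : Order.IsSuccLimit κ) :
    ∃ (L : Set Ordinal.{0}) (A : Ordinal.{0} → Set Ordinal.{0}),
      Weglorz κ L ∧ (∀ α, BddIn κ (A α)) ∧
      (L ∪ diagU L A) ⊆ Iio κ.ord ∧ ¬ Weglorz κ (L ∪ diagU L A) :=
  ⟨cardOrdSuccs κ, nextCardIio κ, weglorz_cardOrdSuccs hunc.le, bddIn_nextCardIio hlim,
    union_diagU_subset_Iio hunc.le hlim, not_weglorz_union_diagU hunc⟩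

/-- For a regular uncountable limit cardinal `κ`, Węglorz's ideal `J_κ` is not
prepleasant. -/
theorem stmt7 (κ : Cardinal.{0}) (hreg : κ.IsRegular) (hunc : Cardinal.aleph0 < κ)
    (hlim : Order.IsSuccLimit κ) :
    ∃ (L : Set Ordinal.{0}) (A : Ordinal.{0} → Set Ordinal.{0}),
      Weglorz κ L ∧ (∀ α, BddIn κ (A α)) ∧
      (L ∪ diagU L A) ⊆ Iio κ.ord ∧ ¬ Weglorz κ (L ∪ diagU L A) :=
  stmt7_general κ hunc hlim

end PaperIdeals
end

section
/- If I is a quasinormal ideal on κ extending the nonstationary ideal NS_κ, then I is pleasant, and therefore normal. In particular, every selective ideal extending NS_κ is normal. -/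
open Set

namespace PaperIdeals

/-!
Given `X : κ → I`, apply quasinormality to the cumulative family `Z α = ⋃ β ≤ α, X β`: this gives
`Q ∈ I*` with `∇_Q Z ∈ I`. Since `I` is proper, `Q` is unbounded in `κ`, so by regularity the
ordinals below `κ` in which `Q` is cofinal form a club `C`, and `κ \ C ∈ NS_κ ⊆ I`. If `ξ ∈ X α`
with `α < ξ ∈ C`, some `β ∈ Q` lies strictly between `α` and `ξ`, and then `ξ ∈ Z β`. Hence
`∇ X ⊆ ∇_Q Z ∪ (κ \ C) ∈ I`. Normality implies pleasantness because `∇_A X ⊆ ∇ X`.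
-/

section IdealLemmas

variable {κ : Cardinal.{0}} {J : Set Ordinal.{0} → Prop}

lemma IsIdeal.subset_Iio_s11 (hJ : IsIdeal κ J) {X : Set Ordinal.{0}} (hX : J X) : X ⊆ Iio κ.ord :=
  hJ.1 X hX

lemma IsIdeal.mono_s11 (hJ : IsIdeal κ J) {X Y : Set Ordinal.{0}} (hX : J X) (hYX : Y ⊆ X) : J Y :=
  hJ.2.1 X Y hX hYX

lemma IsIdeal.union_s11 (hJ : IsIdeal κ J) {X Y : Set Ordinal.{0}} (hX : J X) (hY : J Y) :
    J (X ∪ Y) :=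
  hJ.2.2.1 X Y hX hY

lemma IsIdeal.singleton_s11 (hJ : IsIdeal κ J) {ξ : Ordinal.{0}} (hξ : ξ < κ.ord) : J {ξ} :=
  hJ.2.2.2.1 ξ hξ

lemma IsIdeal.biUnion (hJ : IsIdeal κ J) {θ : Ordinal.{0}} (hθ : θ.card < κ)
    {X : Ordinal.{0} → Set Ordinal.{0}} (hX : ∀ α, J (X α)) : J (⋃ α ∈ Iio θ, X α) :=
  hJ.2.2.2.2 θ hθ X hX

lemma IsIdeal.empty_s11 (hJ : IsIdeal κ J) (hκ : κ ≠ 0) : J ∅ :=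
  hJ.mono_s11 (hJ.singleton_s11 (Cardinal.ord_pos.2 (pos_iff_ne_zero.2 hκ))) (empty_subset _)

lemma IsIdeal.biUnion_Iic (hJ : IsIdeal κ J) (hκ : Cardinal.aleph0 ≤ κ) {α : Ordinal.{0}}
    (hα : α < κ.ord) {X : Ordinal.{0} → Set Ordinal.{0}} (hX : ∀ β, J (X β)) :
    J (⋃ β ∈ Iic α, X β) := by
  rw [← Order.Iio_succ]
  exact hJ.biUnion (Cardinal.lt_ord.1 ((Cardinal.isSuccLimit_ord hκ).succ_lt hα)) hX

lemma IsIdeal.Iic_of_lt (hJ : IsIdeal κ J) (hκ : Cardinal.aleph0 ≤ κ) {α : Ordinal.{0}}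
    (hα : α < κ.ord) : J (Iic α) := by
  have hX : ∀ β, J ({β} ∩ Iic α) := by
    intro β
    by_cases hβ : β ≤ α
    · exact hJ.mono_s11 (hJ.singleton_s11 (hβ.trans_lt hα)) inter_subset_left
    · exact hJ.mono_s11 (hJ.empty_s11 (Cardinal.aleph0_pos.trans_le hκ).ne') (by simp [hβ])
  exact hJ.mono_s11 (hJ.biUnion_Iic hκ hα hX) fun ξ hξ => mem_biUnion hξ ⟨rfl, hξ⟩

lemma Dual.exists_gt (hJ : IsIdeal κ J) (hprop : Proper κ J) (hκ : Cardinal.aleph0 ≤ κ)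
    {Q : Set Ordinal.{0}} (hQ : Dual κ J Q) {α : Ordinal.{0}} (hα : α < κ.ord) :
    ∃ β ∈ Q, α < β := by
  by_contra! hQα
  refine hprop (hJ.mono_s11 (hJ.union_s11 (hJ.Iic_of_lt hκ hα) hQ.2) fun ξ hξ => ?_)
  by_cases hξQ : ξ ∈ Q
  · exact Or.inl (hQα ξ hξQ)
  · exact Or.inr ⟨hξ, hξQ⟩

lemma Normal.pleasant_s11 (hJ : IsIdeal κ J) (hN : Normal κ J) : Pleasant J :=
  fun _ _ X hX => hJ.mono_s11 (hN X hX) fun _ ⟨α, hαξ, _, hξ⟩ =>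
    ⟨α, hαξ, hαξ.trans (hJ.subset_Iio_s11 (hX α) hξ), hξ⟩

end IdealLemmas

def accPoints (o : Ordinal.{0}) (Q : Set Ordinal.{0}) : Set Ordinal.{0} :=
  {δ | δ < o ∧ ∀ γ < δ, ∃ β ∈ Q, γ < β ∧ β < δ}

lemma exists_mem_accPoints_gt {o : Ordinal.{0}} (ho : Cardinal.aleph0 < o.cof)
    {Q : Set Ordinal.{0}} (hQ : ∀ α < o, ∃ β ∈ Q, α < β ∧ β < o) {α : Ordinal.{0}}
    (hα : α < o) : ∃ δ ∈ accPoints o Q, α < δ := by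
  choose! g hgQ hgt hglt using hQ
  let f : ℕ → Ordinal.{0} := fun n => g^[n + 1] α
  have hf_succ : ∀ n, f (n + 1) = g (f n) := fun n => Function.iterate_succ_apply' g (n + 1) α
  have hf_lt : ∀ n, f n < o := by
    intro n
    induction n with
    | zero => exact hglt α hα
    | succ n ih => rw [hf_succ]; exact hglt _ ih
  have hf_mono : ∀ n, f n < f (n + 1) := fun n => hf_succ n ▸ hgt _ (hf_lt n)
  have hf_le : ∀ n, f n ≤ ⨆ n, f n := le_ciSup Ordinal.bddAbove_of_small
  refine ⟨⨆ n, f n, ⟨Ordinal.iSup_lt_of_lt_cof (by rwa [Cardinal.mk_nat]) hf_lt, fun γ hγ => ?_⟩,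
    (hgt α hα).trans_le (hf_le 0)⟩
  obtain ⟨n, hn⟩ := (lt_ciSup_iff Ordinal.bddAbove_of_small).1 hγ
  have hfQ : f n ∈ Q := by
    cases n with
    | zero => exact hgQ α hα
    | succ n => rw [hf_succ]; exact hgQ _ (hf_lt n)
  exact ⟨f n, hfQ, hn, (hf_mono n).trans_le (hf_le (n + 1))⟩

lemma isClubIn_accPoints {κ : Cardinal.{0}} (hreg : κ.IsRegular) (hunc : Cardinal.aleph0 < κ)
    {Q : Set Ordinal.{0}} (hQ : Q ⊆ Iio κ.ord) (hQunb : ∀ α < κ.ord, ∃ β ∈ Q, α < β) :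
    IsClubIn κ (accPoints κ.ord Q) := by
  refine ⟨fun δ hδ => hδ.1, fun α hα => ?_, fun δ hδ _ hδC => ⟨hδ, fun γ hγ => ?_⟩⟩
  · exact exists_mem_accPoints_gt (hreg.cof_ord.symm ▸ hunc)
      (fun α hα => (hQunb α hα).imp fun β ⟨hβQ, hαβ⟩ => ⟨hβQ, hαβ, hQ hβQ⟩) hα
  · obtain ⟨ε, hεC, hγε, hεδ⟩ := hδC γ hγ
    obtain ⟨β, hβQ, hγβ, hβε⟩ := hεC.2 γ hγε
    exact ⟨β, hβQ, hγβ, hβε.trans hεδ⟩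

theorem Quasinormal.normal {κ : Cardinal.{0}} (hreg : κ.IsRegular) (hunc : Cardinal.aleph0 < κ)
    {J : Set Ordinal.{0} → Prop} (hJ : IsIdeal κ J) (hprop : Proper κ J)
    (hext : ∀ X, NS κ X → J X) (hq : Quasinormal κ J) : Normal κ J := by
  intro X hX
  -- truncated at `κ` so that each `Z α` lies in `J`; only its values on `Q ⊆ κ` are used
  let Z : Ordinal.{0} → Set Ordinal.{0} := fun α => if α < κ.ord then ⋃ β ∈ Iic α, X β else ∅
  have hZ : ∀ α, J (Z α) := by
    intro α
    by_cases hα : α < κ.ord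
    · simpa only [Z, if_pos hα] using hJ.biUnion_Iic hunc.le hα hX
    · simpa only [Z, if_neg hα] using hJ.empty_s11 (Cardinal.aleph0_pos.trans hunc).ne'
  obtain ⟨Q, hQ, hQZ⟩ := hq Z hZ
  have hC : IsClubIn κ (accPoints κ.ord Q) :=
    isClubIn_accPoints hreg hunc hQ.1 fun α hα => hQ.exists_gt hJ hprop hunc.le hα
  refine hJ.mono_s11 (hJ.union_s11 hQZ (hext _ ⟨sdiff_subset, _, hC, sdiff_inter_self⟩)) ?_
  rintro ξ ⟨α, hαξ, -, hξ⟩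
  by_cases hξC : ξ ∈ accPoints κ.ord Q
  · obtain ⟨β, hβQ, hαβ, hβξ⟩ := hξC.2 α hαξ
    refine Or.inl ⟨β, hβξ, hβQ, ?_⟩
    dsimp only [Z]
    rw [if_pos (show β < κ.ord from hQ.1 hβQ)]
    exact mem_biUnion hαβ.le hξ
  · exact Or.inr ⟨hJ.subset_Iio_s11 (hX α) hξ, hξC⟩

/-- A quasinormal ideal extending `NS κ` is pleasant, and therefore normal. -/
theorem stmt11 (κ : Cardinal.{0}) (hreg : κ.IsRegular) (hunc : Cardinal.aleph0 < κ)
    (J : Set Ordinal.{0} → Prop) (hJ : IsIdeal κ J) (hprop : Proper κ J)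
    (hext : ∀ X, NS κ X → J X) (hq : Quasinormal κ J) :
    Pleasant J ∧ Normal κ J := by
  have hN : Normal κ J := hq.normal hreg hunc hJ hprop hext
  exact ⟨hN.pleasant_s11 hJ, hN⟩

end PaperIdeals
end

section
/- If I is an ideal on κ with L = {λ+1 : λ a limit ordinal < κ} ∈ I, then every nonstationary subset of κ belongs to the pleasant closure P(I) of I; hence P(I) extends NS_κ and is normal. -/
open Set

namespace PaperIdeals

/-!
Let `A` be disjoint from a club `C`. For `ξ ∈ A` above the least limit point of `C`, the
supremum `λ` of the limit points of `C` below `ξ` is itself a limit point of `C` (by closure),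
so `λ < ξ` and `ξ ≥ λ + 1 ∈ L`. Either `ξ = λ + 1 ∈ L`, or `ξ` lies in the diagonal union over
`λ + 1 ∈ L` of the fibres of `ξ ↦ λ`, which are bounded by the next limit point of `C`.
Hence `A` is covered by a bounded set, `L` and a diagonal union indexed by `L`.

Normality then follows since the successor ordinals are nonstationary:
`∇_{α < κ} X_α ⊆ S ∪ ∇_{α + 1 ∈ S} X_α` for `S` the set of successors below `κ`.
-/

open Order

theorem IsIdeal.mem_of_bddIn {κ : Cardinal.{0}} {K : Set Ordinal.{0} → Prop} (hK : IsIdeal κ K)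
    {X : Set Ordinal.{0}} (hX : BddIn κ X) : K X := by
  obtain ⟨-, hmono, -, hsingle, hunion⟩ := hK
  obtain ⟨θ, hθ, hXθ⟩ := hX
  have hsub : X ⊆ ⋃ α ∈ Iio θ, X ∩ {α} := fun ξ hξ => mem_biUnion (hXθ hξ) ⟨hξ, rfl⟩
  refine hmono _ _ (hunion θ (Cardinal.lt_ord.mp hθ) _ fun α => ?_) hsub
  by_cases hα : α < κ.ord
  · exact hmono _ _ (hsingle α hα) inter_subset_right
  · exact hmono _ _ (hsingle 0 (zero_le.trans_lt hθ)) fun ξ ⟨hξ, hξα⟩ =>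
      absurd ((hXθ hξ).trans hθ) (hξα ▸ hα)

theorem IsClubIn.exists_isSuccLimit_mem_gt {κ : Cardinal.{0}} (hreg : κ.IsRegular)
    (hunc : Cardinal.aleph0 < κ) {C : Set Ordinal.{0}} (hC : IsClubIn κ C) {α : Ordinal.{0}}
    (hα : α < κ.ord) : ∃ δ ∈ C, IsSuccLimit δ ∧ α < δ := by
  obtain ⟨hCκ, hCunbdd, hCclosed⟩ := hC
  choose! next hnextC hlt_next using hCunbdd
  have hnext_lt : ∀ β < κ.ord, next β < κ.ord := fun β hβ => hCκ (hnextC β hβ)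
  have hiter : ∀ n, next^[n] α < κ.ord := by
    intro n
    induction n with
    | zero => exact hα
    | succ n ih => rw [Function.iterate_succ_apply']; exact hnext_lt _ ih
  set δ := Ordinal.nfp next α
  have hδ : δ < κ.ord := Ordinal.nfp_lt_ord (by rwa [hreg.cof_ord]) hnext_lt hα
  -- the iterates of `next` are points of `C` cofinal in their supremum `δ`
  have hcofinal : ∀ β < δ, ∃ c ∈ C, β < c ∧ c < δ := by
    intro β hβ
    obtain ⟨n, hn⟩ := Ordinal.lt_nfp_iff.mp hβ
    refine ⟨next^[n + 1] α, ?_, ?_, ?_⟩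
    · rw [Function.iterate_succ_apply']; exact hnextC _ (hiter n)
    · rw [Function.iterate_succ_apply']; exact hn.trans (hlt_next _ (hiter n))
    · calc next^[n + 1] α < next^[n + 2] α := by
            rw [Function.iterate_succ_apply' _ (n + 1)]; exact hlt_next _ (hiter _)
        _ ≤ δ := Ordinal.iterate_le_nfp _ _ _
  have hαδ : α < δ := (hlt_next α hα).trans_le (Ordinal.iterate_le_nfp next α 1)
  have hδlim : IsSuccLimit δ := by
    refine Ordinal.isSuccLimit_iff.mpr ⟨(zero_le.trans_lt hαδ).ne', fun β hβ => ?_⟩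
    obtain ⟨c, -, hβc, hcδ⟩ := hcofinal β hβ.lt
    exact hβ.2 hβc hcδ
  exact ⟨δ, hCclosed δ hδ hδlim hcofinal, hδlim, hαδ⟩

theorem IsClubIn.sSup_mem {κ : Cardinal.{0}} {C S : Set Ordinal.{0}} (hC : IsClubIn κ C)
    (hSC : S ⊆ C) (hS : ∀ δ ∈ S, IsSuccLimit δ) (hne : S.Nonempty) (hlt : sSup S < κ.ord) :
    sSup S ∈ C ∧ IsSuccLimit (sSup S) := by
  have hbdd : BddAbove S := ⟨κ.ord, fun δ hδ => (hC.1 (hSC hδ)).le⟩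
  by_cases hmem : sSup S ∈ S
  · exact ⟨hSC hmem, hS _ hmem⟩
  have hlim : IsSuccLimit (sSup S) :=
    by_contra fun h => hmem (csSup_mem_of_not_isSuccLimit hne hbdd h)
  refine ⟨hC.2.2 _ hlt hlim fun β hβ => ?_, hlim⟩
  obtain ⟨c, hcS, hβc⟩ := exists_lt_of_lt_csSup hne hβ
  exact ⟨c, hSC hcS, hβc, (le_csSup hbdd hcS).lt_of_ne fun h => hmem (h ▸ hcS)⟩

theorem isClubIn_isSuccLimit {κ : Cardinal.{0}} (hunc : Cardinal.aleph0 < κ) :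
    IsClubIn κ (Iio κ.ord ∩ {δ | IsSuccLimit δ}) := by
  refine ⟨inter_subset_left, fun α hα => ⟨α + Ordinal.omega0, ⟨?_, ?_⟩, ?_⟩,
    fun δ hδ hlim _ => ⟨hδ, hlim⟩⟩
  · exact Ordinal.isPrincipal_add_ord hunc.le hα (Cardinal.omega0_lt_ord.mpr hunc)
  · exact Ordinal.isSuccLimit_add α Ordinal.isSuccLimit_omega0
  · simp [Ordinal.omega0_pos]

theorem ns_succ {κ : Cardinal.{0}} (hunc : Cardinal.aleph0 < κ) :
    NS κ (Iio κ.ord ∩ range (· + 1)) := by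
  refine ⟨inter_subset_left, _, isClubIn_isSuccLimit hunc, ?_⟩
  rw [eq_empty_iff_forall_notMem]
  rintro _ ⟨⟨-, γ, rfl⟩, -, hlim⟩
  exact not_isSuccLimit_succ γ hlim

noncomputable def sSupLimitsBelow (C : Set Ordinal.{0}) (ξ : Ordinal.{0}) : Ordinal.{0} :=
  sSup (C ∩ {δ | IsSuccLimit δ} ∩ Iio ξ)

theorem sSupLimitsBelow_le (C : Set Ordinal.{0}) (ξ : Ordinal.{0}) : sSupLimitsBelow C ξ ≤ ξ :=
  csSup_le' fun _ hδ => hδ.2.le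

theorem le_sSupLimitsBelow {C : Set Ordinal.{0}} {δ ξ : Ordinal.{0}} (hδC : δ ∈ C)
    (hδ : IsSuccLimit δ) (hδξ : δ < ξ) : δ ≤ sSupLimitsBelow C ξ :=
  le_csSup ⟨ξ, fun _ h => h.2.le⟩ ⟨⟨hδC, hδ⟩, hδξ⟩

theorem IsClubIn.sSupLimitsBelow_mem {κ : Cardinal.{0}} {C : Set Ordinal.{0}} (hC : IsClubIn κ C)
    {δ ξ : Ordinal.{0}} (hδC : δ ∈ C) (hδ : IsSuccLimit δ) (hδξ : δ < ξ) (hξ : ξ < κ.ord) :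
    sSupLimitsBelow C ξ ∈ C ∧ IsSuccLimit (sSupLimitsBelow C ξ) :=
  hC.sSup_mem (fun _ h => h.1.1) (fun _ h => h.1.2) ⟨δ, ⟨hδC, hδ⟩, hδξ⟩
    ((sSupLimitsBelow_le C ξ).trans_lt hξ)

theorem IsClubIn.bddIn_sSupLimitsBelow_eq {κ : Cardinal.{0}} (hreg : κ.IsRegular)
    (hunc : Cardinal.aleph0 < κ) {C : Set Ordinal.{0}} (hC : IsClubIn κ C) (μ : Ordinal.{0}) :
    BddIn κ {ξ | ξ < κ.ord ∧ sSupLimitsBelow C ξ = μ} := by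
  have hκlim : IsSuccLimit κ.ord := Cardinal.isSuccLimit_ord hunc.le
  rcases eq_empty_or_nonempty {ξ | ξ < κ.ord ∧ sSupLimitsBelow C ξ = μ} with h | ⟨ξ₀, hξ₀, rfl⟩
  · exact ⟨0, hκlim.bot_lt, h ▸ empty_subset _⟩
  obtain ⟨b, hbC, hb, hlt⟩ :=
    hC.exists_isSuccLimit_mem_gt hreg hunc ((sSupLimitsBelow_le C ξ₀).trans_lt hξ₀)
  refine ⟨b + 1, hκlim.add_one_lt (hC.1 hbC), fun ξ ⟨_, hξ⟩ => mem_Iio.mpr (lt_add_one_iff.mpr ?_)⟩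
  by_contra! hbξ
  exact (le_sSupLimitsBelow hbC hb hbξ).not_gt (hξ ▸ hlt)

theorem Pleasant.mem_of_ns {κ : Cardinal.{0}} (hreg : κ.IsRegular) (hunc : Cardinal.aleph0 < κ)
    {K : Set Ordinal.{0} → Prop} (hP : Pleasant K) (hK : IsIdeal κ K) (hL : K (LSet κ))
    {A : Set Ordinal.{0}} (hA : NS κ A) : K A := by
  obtain ⟨hAκ, C, hC, hAC⟩ := hA
  have hκlim : IsSuccLimit κ.ord := Cardinal.isSuccLimit_ord hunc.le
  obtain ⟨c₀, hc₀C, hc₀, -⟩ := hC.exists_isSuccLimit_mem_gt hreg hunc hκlim.bot_lt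
  set X : Ordinal.{0} → Set Ordinal.{0} :=
    fun β => {ξ | ξ < κ.ord ∧ sSupLimitsBelow C ξ = Ordinal.pred β}
  have hcover : A ⊆ Iio (c₀ + 1) ∪ LSet κ ∪ diagU (LSet κ) X := by
    intro ξ hξ
    rcases le_or_gt ξ c₀ with hξc₀ | hc₀ξ
    · exact .inl (.inl (lt_add_one_iff.mpr hξc₀))
    obtain ⟨hlamC, hlam⟩ := hC.sSupLimitsBelow_mem hc₀C hc₀ hc₀ξ (hAκ hξ)
    have hlt : sSupLimitsBelow C ξ < ξ := (sSupLimitsBelow_le C ξ).lt_of_ne fun h =>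
      (eq_empty_iff_forall_notMem.mp hAC) ξ ⟨hξ, h ▸ hlamC⟩
    have hsucc_le := add_one_le_of_lt hlt
    have hξL : sSupLimitsBelow C ξ + 1 ∈ LSet κ := ⟨_, hlam, rfl, hsucc_le.trans_lt (hAκ hξ)⟩
    rcases hsucc_le.lt_or_eq with hsucc_lt | heq
    · exact .inr ⟨_, hsucc_lt, hξL, hAκ hξ, by simp⟩
    · exact .inl (.inr (heq ▸ hξL))
  have hbdd : K (Iio (c₀ + 1)) :=
    hK.mem_of_bddIn ⟨c₀ + 1, hκlim.add_one_lt (hC.1 hc₀C), subset_rfl⟩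
  have hX : ∀ β, K (X β) := fun β => hK.mem_of_bddIn (hC.bddIn_sSupLimitsBelow_eq hreg hunc _)
  obtain ⟨-, hmono, hunion, -, -⟩ := hK
  exact hmono _ _ (hunion _ _ (hunion _ _ hbdd hL) (hP _ hL X hX)) hcover

theorem Pleasant.normal {κ : Cardinal.{0}} {K : Set Ordinal.{0} → Prop} (hP : Pleasant K)
    (hK : IsIdeal κ K) (hS : K (Iio κ.ord ∩ range (· + 1))) : Normal κ K := by
  intro X hX
  obtain ⟨hKκ, hmono, hunion, -, -⟩ := hK
  set S := Iio κ.ord ∩ range (· + 1)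
  have hcover : diagU (Iio κ.ord) X ⊆ diagU S (fun β => X (Ordinal.pred β)) ∪ S := by
    rintro ξ ⟨α, hαξ, -, hξ⟩
    have hξκ : ξ < κ.ord := hKκ _ (hX α) hξ
    rcases (add_one_le_of_lt hαξ).lt_or_eq with hlt | heq
    · exact .inl ⟨α + 1, hlt, ⟨hlt.trans hξκ, α, rfl⟩, by simpa using hξ⟩
    · exact .inr ⟨hξκ, α, heq⟩
  exact hmono _ _ (hunion _ _ (hP _ hS _ fun β => hX _) hS) hcover

theorem stmt12_general (κ : Cardinal.{0}) (hreg : κ.IsRegular) (hunc : Cardinal.aleph0 < κ)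
    (J : Set Ordinal.{0} → Prop) (hL : J (LSet κ)) :
    (∀ A, NS κ A → PClosure κ J A) ∧ Normal κ (PClosure κ J) := by
  have hNS : ∀ A, NS κ A → PClosure κ J A := fun _ hA _ hK hP hJK =>
    hP.mem_of_ns hreg hunc hK (hJK _ hL) hA
  refine ⟨hNS, fun X hX K hK hP hJK => ?_⟩
  have hS : K (Iio κ.ord ∩ range (· + 1)) := hNS _ (ns_succ hunc) K hK hP hJK
  exact hP.normal hK hS X fun α => hX α K hK hP hJK

/-- If `L ∈ I`, then every nonstationary set belongs to the pleasant closure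
`P(I)`; hence `P(I)` extends `NS κ` and is normal. -/
theorem stmt12 (κ : Cardinal.{0}) (hreg : κ.IsRegular) (hunc : Cardinal.aleph0 < κ)
    (J : Set Ordinal.{0} → Prop) (hJ : IsIdeal κ J) (hL : J (LSet κ)) :
    (∀ A, NS κ A → PClosure κ J A) ∧ Normal κ (PClosure κ J) :=
  stmt12_general κ hreg hunc J hL

end PaperIdeals
end
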